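/- For every γ ≥ 0 there exists a constant C_2 > 0 depending only on γ such that for every integer d ≥ 1, all probability vectors p, q ∈ [0,1]^d, and every v ∈ {0,1}^d: |IoU_γ(v; q) − IoU_γ(v; p)| ≤ C_2 Σ_{j=1}^{d} |q_j − p_j|; consequently, if v̂ maximizes v ↦ IoU_γ(v; q) over {0,1}^d and v* maximizes v ↦ IoU_γ(v; p) over {0,1}^d, then IoU_γ(v*; p) − IoU_γ(v̂; p) ≤ 2 C_2 Σ_{j=1}^{d} |q_j − p_j|. -/

import Mathlib

/-!
`IoU_γ(v; p)` is the expectation, under the product Bernoulli law with parameters `p`, of a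
ratio lying in `[0, 1]` (nonnegative as `γ ≥ 0`, at most `1` as `|v ∧ Y| ≤ |v|, |Y|`).
Hence the change of `IoU_γ(v; ·)` is at most the `ℓ¹` distance between the two product laws,
and replacing the parameters one coordinate at a time shows that this distance is at most
`2 Σⱼ |qⱼ - pⱼ|`: so `C₂ = 2` works. The excess-risk bound is the usual plug-in argument:
a maximizer of a function `ε`-close to `G` in sup norm is `2ε`-optimal for `G`.
-/

open Finset

/-- Weight of a binary configuration `y` under independent Bernoulli probabilities `p`. -/
noncomputable def bw {d : ℕ} (p : Fin d → ℝ) (y : Fin d → Bool) : ℝ :=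
  ∏ j, if y j = true then p j else 1 - p j

/-- Number of `true` coordinates of `y`. -/
def cnt {d : ℕ} (y : Fin d → Bool) : ℕ :=
  (Finset.univ.filter (fun j => y j = true)).card

/-- The IoU score
`IoU_γ(v; p) = E[(Σⱼ vⱼYⱼ + γ)/(Σⱼ Yⱼ + Σⱼ vⱼ - Σⱼ vⱼYⱼ + γ)]`
for independent Bernoulli `Yⱼ` with success probabilities `pⱼ` (convention 0/0 = 0). -/
noncomputable def iou {d : ℕ} (γ : ℝ) (p : Fin d → ℝ) (v : Fin d → Bool) : ℝ :=
  ∑ y : Fin d → Bool, bw p y *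
    ((((Finset.univ.filter (fun j => v j = true ∧ y j = true)).card : ℝ) + γ) /
      ((cnt y : ℝ) + (cnt v : ℝ) -
        ((Finset.univ.filter (fun j => v j = true ∧ y j = true)).card : ℝ) + γ))

def bernoulliWeight (x : ℝ) (b : Bool) : ℝ :=
  if b = true then x else 1 - x

lemma bernoulliWeight_nonneg {x : ℝ} (hx : x ∈ Set.Icc (0 : ℝ) 1) (b : Bool) :
    0 ≤ bernoulliWeight x b := by
  cases b <;> simp [bernoulliWeight, hx.1, hx.2]

lemma abs_bernoulliWeight_sub (x y : ℝ) (b : Bool) :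
    |bernoulliWeight x b - bernoulliWeight y b| = |x - y| := by
  cases b
  · simp only [bernoulliWeight, Bool.false_eq_true, if_false]
    rw [abs_sub_comm]
    congr 1
    ring
  · simp [bernoulliWeight]

section ProductWeights

variable {d : ℕ}

lemma bw_eq_prod_bernoulliWeight (p : Fin d → ℝ) (y : Fin d → Bool) :
    bw p y = ∏ j, bernoulliWeight (p j) (y j) := rfl

lemma sum_prod_erase_bernoulliWeight (p : Fin d → ℝ) (j : Fin d) :
    ∑ y : Fin d → Bool, ∏ i ∈ univ.erase j, bernoulliWeight (p i) (y i) = 2 := by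
  simp_rw [← filter_ne', prod_filter]
  rw [← Fintype.prod_sum (fun i b => if i ≠ j then bernoulliWeight (p i) b else 1)]
  simp [bernoulliWeight]

lemma bw_update_sub (p : Fin d → ℝ) (j : Fin d) (t : ℝ) (y : Fin d → Bool) :
    bw (Function.update p j t) y - bw p y =
      (bernoulliWeight t (y j) - bernoulliWeight (p j) (y j)) *
        ∏ i ∈ univ.erase j, bernoulliWeight (p i) (y i) := by
  simp only [bw_eq_prod_bernoulliWeight, ← mul_prod_erase univ _ (mem_univ j),
    Function.update_self]
  rw [prod_congr rfl fun i hi => by rw [Function.update_of_ne (ne_of_mem_erase hi)]]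
  ring

lemma sum_abs_bw_update_sub {p : Fin d → ℝ} (hp : ∀ i, p i ∈ Set.Icc (0 : ℝ) 1) (j : Fin d)
    (t : ℝ) : ∑ y, |bw (Function.update p j t) y - bw p y| = 2 * |t - p j| := by
  simp_rw [bw_update_sub, abs_mul, abs_bernoulliWeight_sub,
    abs_of_nonneg (prod_nonneg fun i _ => bernoulliWeight_nonneg (hp i) _), ← mul_sum,
    sum_prod_erase_bernoulliWeight, mul_comm]

lemma sum_abs_bw_piecewise_sub_le {p q : Fin d → ℝ} (hp : ∀ i, p i ∈ Set.Icc (0 : ℝ) 1)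
    (hq : ∀ i, q i ∈ Set.Icc (0 : ℝ) 1) (s : Finset (Fin d)) :
    ∑ y, |bw (s.piecewise q p) y - bw p y| ≤ 2 * ∑ j ∈ s, |q j - p j| := by
  induction s using Finset.induction_on with
  | empty => simp
  | insert a s ha ih =>
    have hr : ∀ i, s.piecewise q p i ∈ Set.Icc (0 : ℝ) 1 := fun i =>
      s.piecewise_cases q p (· ∈ Set.Icc (0 : ℝ) 1) (hq i) (hp i)
    rw [piecewise_insert, sum_insert ha, mul_add]
    calc ∑ y, |bw (Function.update (s.piecewise q p) a (q a)) y - bw p y|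
        ≤ ∑ y, (|bw (Function.update (s.piecewise q p) a (q a)) y - bw (s.piecewise q p) y|
            + |bw (s.piecewise q p) y - bw p y|) := sum_le_sum fun y _ => abs_sub_le _ _ _
      _ ≤ 2 * |q a - p a| + 2 * ∑ j ∈ s, |q j - p j| := by
        rw [sum_add_distrib, sum_abs_bw_update_sub hr, piecewise_eq_of_notMem _ _ _ ha]
        exact add_le_add_right ih _

lemma sum_abs_bw_sub_le {p q : Fin d → ℝ} (hp : ∀ i, p i ∈ Set.Icc (0 : ℝ) 1)
    (hq : ∀ i, q i ∈ Set.Icc (0 : ℝ) 1) :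
    ∑ y, |bw q y - bw p y| ≤ 2 * ∑ j, |q j - p j| := by
  simpa using sum_abs_bw_piecewise_sub_le hp hq univ

end ProductWeights

lemma abs_sum_mul_sub_sum_mul_le {ι : Type*} [Fintype ι] (a b f : ι → ℝ)
    (hf : ∀ i, |f i| ≤ 1) :
    |∑ i, a i * f i - ∑ i, b i * f i| ≤ ∑ i, |a i - b i| := by
  rw [← sum_sub_distrib]
  refine (abs_sum_le_sum_abs _ _).trans (sum_le_sum fun i _ => ?_)
  rw [← sub_mul, abs_mul]
  exact mul_le_of_le_one_right (abs_nonneg _) (hf i)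

lemma abs_add_div_sub_add_le_one {a b c γ : ℝ} (ha : 0 ≤ a) (hab : a ≤ b) (hac : a ≤ c)
    (hγ : 0 ≤ γ) : |(a + γ) / (b + c - a + γ)| ≤ 1 := by
  rw [abs_of_nonneg (div_nonneg (by positivity) (by linarith))]
  exact div_le_one_of_le₀ (by linarith) (by linarith)

lemma abs_iou_sub_le {d : ℕ} {γ : ℝ} (hγ : 0 ≤ γ) {p q : Fin d → ℝ}
    (hp : ∀ i, p i ∈ Set.Icc (0 : ℝ) 1) (hq : ∀ i, q i ∈ Set.Icc (0 : ℝ) 1) (v : Fin d → Bool) :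
    |iou γ q v - iou γ p v| ≤ 2 * ∑ j, |q j - p j| := by
  refine (abs_sum_mul_sub_sum_mul_le _ _ _ fun y => ?_).trans (sum_abs_bw_sub_le hp hq)
  have hv : #{j | v j = true ∧ y j = true} ≤ cnt v :=
    card_le_card (monotone_filter_right _ fun _ _ h => h.1)
  have hy : #{j | v j = true ∧ y j = true} ≤ cnt y :=
    card_le_card (monotone_filter_right _ fun _ _ h => h.2)
  exact abs_add_div_sub_add_le_one (Nat.cast_nonneg _) (by exact_mod_cast hy)
    (by exact_mod_cast hv) hγ

lemma sub_le_two_mul_of_forall_abs_sub_le {α : Type*} {F G : α → ℝ} {ε : ℝ}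
    (hFG : ∀ x, |F x - G x| ≤ ε) {a : α} (ha : ∀ x, F x ≤ F a) (b : α) :
    G b - G a ≤ 2 * ε := by
  linarith [ha b, abs_le.mp (hFG a), abs_le.mp (hFG b)]

/-- **L1-stability and excess risk for IoU.** For every `γ ≥ 0` there is a constant
`C₂ > 0` depending only on `γ` such that for all `d ≥ 1`, all probability vectors
`p, q ∈ [0,1]^d` and every `v ∈ {0,1}^d`,
`|IoU_γ(v; q) - IoU_γ(v; p)| ≤ C₂ Σⱼ |qⱼ - pⱼ|`; consequently, if `v̂` maximizes
`IoU_γ(·; q)` and `v*` maximizes `IoU_γ(·; p)` over `{0,1}^d`, then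
`IoU_γ(v*; p) - IoU_γ(v̂; p) ≤ 2C₂ Σⱼ |qⱼ - pⱼ|`. -/
theorem iou_l1_stability_and_excess_risk (γ : ℝ) (hγ : 0 ≤ γ) :
    ∃ C2 : ℝ, 0 < C2 ∧ ∀ d : ℕ, 1 ≤ d → ∀ p q : Fin d → ℝ,
      (∀ j, p j ∈ Set.Icc (0 : ℝ) 1) → (∀ j, q j ∈ Set.Icc (0 : ℝ) 1) →
      (∀ v : Fin d → Bool, |iou γ q v - iou γ p v| ≤ C2 * ∑ j, |q j - p j|) ∧
      (∀ vhat vstar : Fin d → Bool,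
        (∀ w : Fin d → Bool, iou γ q w ≤ iou γ q vhat) →
        (∀ w : Fin d → Bool, iou γ p w ≤ iou γ p vstar) →
        iou γ p vstar - iou γ p vhat ≤ 2 * C2 * ∑ j, |q j - p j|) := by
  refine ⟨2, two_pos, fun d _ p q hp hq => ⟨abs_iou_sub_le hγ hp hq, ?_⟩⟩
  intro vhat vstar hvhat _
  rw [mul_assoc]
  exact sub_le_two_mul_of_forall_abs_sub_le (abs_iou_sub_le hγ hp hq) hvhat vstar
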